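/- Let H be a multi-conclusion sequent calculus extending CFL_e in which the axiom 0 ⇒ and the rules (L→), (R→), (R0) are admissible. If a p-free formula F satisfies: H ⊢ Γ, F ⇒ Δ, and for all p-free multisets Σ, Λ, derivability of Γ, Σ ⇒ Λ, Δ (in a subsystem G) implies H ⊢ Σ ⇒ F, Λ; then the formula ¬F := F → 0 satisfies: H ⊢ Γ ⇒ Δ, ¬F, and for all p-free Σ, Λ, derivability of Γ, Σ ⇒ Λ, Δ in G implies H ⊢ ¬F, Σ ⇒ Λ. -/
import Mathlib


inductive Fm : Type where
  | var : Nat → Fm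
  | one : Fm
  | zero : Fm
  | top : Fm
  | bot : Fm
  | conj : Fm → Fm → Fm
  | disj : Fm → Fm → Fm
  | imp : Fm → Fm → Fm
  | fus : Fm → Fm → Fm
  | plus : Fm → Fm → Fm
  deriving DecidableEq

def Fm.occurs (p : Nat) : Fm → Bool
  | .var q => p == q
  | .one => false
  | .zero => false
  | .top => false
  | .bot => false
  | .conj a b => a.occurs p || b.occurs p
  | .disj a b => a.occurs p || b.occurs p
  | .imp a b => a.occurs p || b.occurs p
  | .fus a b => a.occurs p || b.occurs p
  | .plus a b => a.occurs p || b.occurs p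

/-- A formula is `p`-free if the atom `p` does not occur in it. -/
def pFree (p : Nat) (φ : Fm) : Prop := φ.occurs p = false

/-- A multi-conclusion sequent calculus extends `CFL_e` when it is closed under
all rules and axioms of the multi-conclusion commutative Full Lambek calculus. -/
structure IsCFLe (H : Multiset Fm → Multiset Fm → Prop) : Prop where
  idAx : ∀ φ, H {φ} {φ}
  topAx : ∀ Γ Δ, H Γ (Fm.top ::ₘ Δ)
  botAx : ∀ Γ Δ, H (Fm.bot ::ₘ Γ) Δ
  oneRAx : H 0 {Fm.one}
  zeroLAx : H {Fm.zero} 0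
  oneL : ∀ Γ Δ, H Γ Δ → H (Fm.one ::ₘ Γ) Δ
  zeroR : ∀ Γ Δ, H Γ Δ → H Γ (Fm.zero ::ₘ Δ)
  conjL₁ : ∀ Γ Δ φ ψ, H (φ ::ₘ Γ) Δ → H (Fm.conj φ ψ ::ₘ Γ) Δ
  conjL₂ : ∀ Γ Δ φ ψ, H (ψ ::ₘ Γ) Δ → H (Fm.conj φ ψ ::ₘ Γ) Δ
  conjR : ∀ Γ Δ φ ψ, H Γ (φ ::ₘ Δ) → H Γ (ψ ::ₘ Δ) → H Γ (Fm.conj φ ψ ::ₘ Δ)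
  disjL : ∀ Γ Δ φ ψ, H (φ ::ₘ Γ) Δ → H (ψ ::ₘ Γ) Δ → H (Fm.disj φ ψ ::ₘ Γ) Δ
  disjR₁ : ∀ Γ Δ φ ψ, H Γ (φ ::ₘ Δ) → H Γ (Fm.disj φ ψ ::ₘ Δ)
  disjR₂ : ∀ Γ Δ φ ψ, H Γ (ψ ::ₘ Δ) → H Γ (Fm.disj φ ψ ::ₘ Δ)
  fusL : ∀ Γ Δ φ ψ, H (φ ::ₘ ψ ::ₘ Γ) Δ → H (Fm.fus φ ψ ::ₘ Γ) Δ
  fusR : ∀ Γ Δ Θ Λ φ ψ, H Γ (φ ::ₘ Δ) → H Θ (ψ ::ₘ Λ) → H (Γ + Θ) (Fm.fus φ ψ ::ₘ (Δ + Λ))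
  impL : ∀ Γ Δ Θ Λ φ ψ, H Γ (φ ::ₘ Δ) → H (ψ ::ₘ Θ) Λ → H (Fm.imp φ ψ ::ₘ (Γ + Θ)) (Δ + Λ)
  impR : ∀ Γ Δ φ ψ, H (φ ::ₘ Γ) (ψ ::ₘ Δ) → H Γ (Fm.imp φ ψ ::ₘ Δ)
  plusL : ∀ Γ Δ Θ Λ φ ψ, H (φ ::ₘ Γ) Δ → H (ψ ::ₘ Θ) Λ → H (Fm.plus φ ψ ::ₘ (Γ + Θ)) (Δ + Λ)
  plusR : ∀ Γ Δ φ ψ, H Γ (φ ::ₘ ψ ::ₘ Δ) → H Γ (Fm.plus φ ψ ::ₘ Δ)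

/-- If a `p`-free `F` is a strong left `p`-interpolant of the
sequent `Γ ⇒ Δ` (over a subsystem `G`), then `¬F := F → 0` is a strong right
`p`-interpolant, in any multi-conclusion calculus `H` extending `CFL_e`. -/
theorem neg_of_strong_left_interpolant_is_strong_right_interpolant
    (H : Multiset Fm → Multiset Fm → Prop) (hH : IsCFLe H)
    (G : Multiset Fm → Multiset Fm → Prop)
    (p : Nat) (Γ Δ : Multiset Fm) (F : Fm) (hpF : pFree p F)
    (h1 : H (F ::ₘ Γ) Δ)
    (h2 : ∀ Ss Ls : Multiset Fm, (∀ c ∈ Ss, pFree p c) → (∀ d ∈ Ls, pFree p d) →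
      G (Γ + Ss) (Ls + Δ) → H Ss (F ::ₘ Ls)) :
    H Γ (Fm.imp F Fm.zero ::ₘ Δ) ∧
      ∀ Ss Ls : Multiset Fm, (∀ c ∈ Ss, pFree p c) → (∀ d ∈ Ls, pFree p d) →
        G (Γ + Ss) (Ls + Δ) → H (Fm.imp F Fm.zero ::ₘ Ss) Ls := by
  constructor
  · exact hH.impR Γ Δ F Fm.zero (hH.zeroR _ _ h1)
  · intro Ss Ls hS hL hG
    have h3 := h2 Ss Ls hS hL hG
    have h4 : H (Fm.zero ::ₘ (0 : Multiset Fm)) 0 := hH.zeroLAx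
    have h5 := hH.impL Ss Ls 0 0 F Fm.zero h3 h4
    simpa using h5
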